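/- arXiv:1506.00071 — 2 statements merged into one kernel-verified Lean document; each statement's English description precedes it below -/
import Mathlib

section
/- Let Q ≅ G/K arise from a short exact sequence 1 → K → G → Q → 1, let N_K ⊆ A* be a prefix-closed set of unique normal forms for K over a generating set A of K, and let N_Q be a prefix-closed set of unique normal forms for Q over B, lifted via a set-section b ↦ b̂ to letters B̂ ⊆ G. Then the concatenation language N_G := N_K · N̂_Q is a prefix-closed set of unique normal forms for G over A ∪ B̂: every g ∈ G is represented by exactly one word in N_G. -/
/-!
Every `g ∈ G` factors uniquely as `g = k · t`, where `t` is the lift `v̂` of the normal form `v`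
of `q g` and `k = g t⁻¹ ∈ K`; writing `k` in its normal form `u` gives the unique word `u v̂`.
A prefix of `u v̂` is a prefix of `u`, or `u` followed by a prefix of `v̂`, so prefix-closedness
passes to the concatenation.
-/

section ConcatSum

variable {α β : Type*}

def concatSum (L : Set (List α)) (M : Set (List β)) : Set (List (α ⊕ β)) :=
  {w | ∃ u ∈ L, ∃ v ∈ M, w = u.map Sum.inl ++ v.map Sum.inr}

theorem List.exists_of_prefix_map_inl_append_map_inr {u : List α} {v : List β}
    {p : List (α ⊕ β)} (hp : p <+: u.map Sum.inl ++ v.map Sum.inr) :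
    ∃ u', u' <+: u ∧ ∃ v', v' <+: v ∧ p = u'.map Sum.inl ++ v'.map Sum.inr := by
  obtain ⟨t, ht⟩ := hp
  rcases List.append_eq_append_iff.mp ht with ⟨a, hu, -⟩ | ⟨c, hp, hv⟩
  · obtain ⟨u', hu', rfl⟩ := List.prefix_map_iff.mp ⟨a, hu.symm⟩
    exact ⟨u', hu', [], List.nil_prefix, by simp⟩
  · obtain ⟨v', hv', rfl⟩ := List.prefix_map_iff.mp ⟨t, hv.symm⟩
    exact ⟨u, List.prefix_refl u, v', hv', hp⟩

theorem concatSum_prefixClosed {L : Set (List α)} {M : Set (List β)}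
    (hL : ∀ w ∈ L, ∀ p : List α, p <+: w → p ∈ L)
    (hM : ∀ w ∈ M, ∀ p : List β, p <+: w → p ∈ M) :
    ∀ w ∈ concatSum L M, ∀ p : List (α ⊕ β), p <+: w → p ∈ concatSum L M := by
  rintro _ ⟨u, hu, v, hv, rfl⟩ p hp
  obtain ⟨u', hu', v', hv', rfl⟩ := List.exists_of_prefix_map_inl_append_map_inr hp
  exact ⟨u', hL u hu u' hu', v', hM v hv v' hv', rfl⟩

theorem List.prod_map_sumElim_map_inl_append_map_inr {M : Type*} [Monoid M]
    (f : α → M) (g : β → M) (u : List α) (v : List β) :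
    ((u.map Sum.inl ++ v.map Sum.inr).map (Sum.elim f g)).prod
      = (u.map f).prod * (v.map g).prod := by
  simp [Function.comp_def]

end ConcatSum

section Extension

variable {G Q A B : Type*} [Group G] [Group Q] (q : G →* Q)
  {fA : A → G} (fB : B → G)

theorem prod_map_mem_ker (hfA : ∀ a, fA a ∈ q.ker) (u : List A) : (u.map fA).prod ∈ q.ker :=
  list_prod_mem <| List.forall_mem_map.mpr fun a _ => hfA a

theorem prod_mul_prod_eq_iff (hfA : ∀ a, fA a ∈ q.ker) (u : List A) (v : List B) (g : G) :
    (u.map fA).prod * (v.map fB).prod = g ↔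
      (v.map (fun b => q (fB b))).prod = q g ∧ (u.map fA).prod = g * (v.map fB).prod⁻¹ := by
  constructor
  · rintro rfl
    refine ⟨?_, (mul_inv_cancel_right _ _).symm⟩
    rw [map_mul, MonoidHom.mem_ker.mp (prod_map_mem_ker q hfA u), one_mul, map_list_prod,
      List.map_map]
    rfl
  · rintro ⟨-, hu⟩
    rw [hu, inv_mul_cancel_right]

theorem existsUnique_mem_concatSum_prod_eq (hfA : ∀ a, fA a ∈ q.ker)
    {NK : Set (List A)} (hKnf : ∀ k ∈ q.ker, ∃! w : List A, w ∈ NK ∧ (w.map fA).prod = k)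
    {NQ : Set (List B)}
    (hQnf : ∀ x : Q, ∃! w : List B, w ∈ NQ ∧ (w.map (fun b => q (fB b))).prod = x) (g : G) :
    ∃! w : List (A ⊕ B), w ∈ concatSum NK NQ ∧ (w.map (Sum.elim fA fB)).prod = g := by
  obtain ⟨v, ⟨hv, hvg⟩, hv_unique⟩ := hQnf (q g)
  have hk : g * (v.map fB).prod⁻¹ ∈ q.ker := by
    rw [MonoidHom.mem_ker, map_mul, map_inv, map_list_prod, List.map_map]
    exact mul_inv_eq_one.mpr hvg.symm
  obtain ⟨u, ⟨hu, hug⟩, hu_unique⟩ := hKnf _ hk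
  refine ⟨_, ⟨⟨u, hu, v, hv, rfl⟩, ?_⟩, ?_⟩
  · rw [List.prod_map_sumElim_map_inl_append_map_inr, prod_mul_prod_eq_iff q fB hfA]
    exact ⟨hvg, hug⟩
  · rintro _ ⟨⟨u', hu', v', hv', rfl⟩, hw⟩
    rw [List.prod_map_sumElim_map_inl_append_map_inr, prod_mul_prod_eq_iff q fB hfA] at hw
    obtain rfl := hv_unique v' ⟨hv', hw.1⟩
    obtain rfl := hu_unique u' ⟨hu', hw.2⟩
    rfl

end Extension

theorem extension_normal_forms_general
    {G Q : Type*} [Group G] [Group Q]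
    (q : G →* Q)
    {A B : Type*}
    -- letters of `A` evaluate into `K = ker q`
    (fA : A → G) (hfA : ∀ x : A, fA x ∈ q.ker)
    -- `B̂ ⊆ G` is recorded by the lift `fB : B → G` with `q ∘ fB` the letters of `B`
    (fB : B → G)
    (NK : Set (List A))
    (hKpc : ∀ w ∈ NK, ∀ p : List A, p <+: w → p ∈ NK)
    (hKnf : ∀ k ∈ q.ker, ∃! w : List A, w ∈ NK ∧ (w.map fA).prod = k)
    (NQ : Set (List B))
    (hQpc : ∀ w ∈ NQ, ∀ p : List B, p <+: w → p ∈ NQ)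
    (hQnf : ∀ x : Q, ∃! w : List B, w ∈ NQ ∧ (w.map (fun b => q (fB b))).prod = x) :
    -- `N_G := N_K · N̂_Q` over the alphabet `A ⊕ B`
    (∀ w ∈ {w : List (A ⊕ B) | ∃ u ∈ NK, ∃ v ∈ NQ,
        w = u.map Sum.inl ++ v.map Sum.inr},
      ∀ p : List (A ⊕ B), p <+: w →
        p ∈ {w : List (A ⊕ B) | ∃ u ∈ NK, ∃ v ∈ NQ,
          w = u.map Sum.inl ++ v.map Sum.inr}) ∧
    (∀ g : G, ∃! w : List (A ⊕ B),
        (∃ u ∈ NK, ∃ v ∈ NQ, w = u.map Sum.inl ++ v.map Sum.inr) ∧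
        (w.map (Sum.elim fA fB)).prod = g) :=
  ⟨concatSum_prefixClosed hKpc hQpc, existsUnique_mem_concatSum_prod_eq q fB hfA hKnf hQnf⟩

/-- Given a short exact sequence `1 → K → G → Q → 1` (with `K = ker q`),
a prefix-closed set `N_K` of unique normal forms for `K` over an alphabet `A`,
and a prefix-closed set `N_Q` of unique normal forms for `Q` over `B`, lifted
to letters `B̂ ⊆ G` via a section `b ↦ b̂`, the concatenation language
`N_G = N_K · N̂_Q` is a prefix-closed set of unique normal forms for `G` over
`A ∪ B̂`. -/
theorem extension_normal_forms
    {G Q : Type*} [Group G] [Group Q]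
    (q : G →* Q) (hq : Function.Surjective q)
    {A B : Type*}
    -- letters of `A` evaluate into `K = ker q`
    (fA : A → G) (hfA : ∀ x : A, fA x ∈ q.ker)
    -- `B̂ ⊆ G` is recorded by the lift `fB : B → G` with `q ∘ fB` the letters of `B`
    (fB : B → G)
    (NK : Set (List A))
    (hKpc : ∀ w ∈ NK, ∀ p : List A, p <+: w → p ∈ NK)
    (hKnf : ∀ k ∈ q.ker, ∃! w : List A, w ∈ NK ∧ (w.map fA).prod = k)
    (NQ : Set (List B))
    (hQpc : ∀ w ∈ NQ, ∀ p : List B, p <+: w → p ∈ NQ)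
    (hQnf : ∀ x : Q, ∃! w : List B, w ∈ NQ ∧ (w.map (fun b => q (fB b))).prod = x) :
    -- `N_G := N_K · N̂_Q` over the alphabet `A ⊕ B`
    (∀ w ∈ {w : List (A ⊕ B) | ∃ u ∈ NK, ∃ v ∈ NQ,
        w = u.map Sum.inl ++ v.map Sum.inr},
      ∀ p : List (A ⊕ B), p <+: w →
        p ∈ {w : List (A ⊕ B) | ∃ u ∈ NK, ∃ v ∈ NQ,
          w = u.map Sum.inl ++ v.map Sum.inr}) ∧
    (∀ g : G, ∃! w : List (A ⊕ B),
        (∃ u ∈ NK, ∃ v ∈ NQ, w = u.map Sum.inl ++ v.map Sum.inr) ∧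
        (w.map (Sum.elim fA fB)).prod = g) :=
  extension_normal_forms_general q fA hfA fB NK hKpc hKnf NQ hQpc hQnf
end

section
/- Let H be a finite-index subgroup of a group G, let S ⊆ G be a set of coset representatives for the right cosets of H in G with 1 ∈ S, and let N_H be a prefix-closed set of unique normal forms for H over a finite inverse-closed generating set A of H. Then N_G := N_H ∪ {ut | u ∈ N_H, t ∈ S \ {1}} (viewing each t ∈ S \ {1} as a new letter) is a prefix-closed set of unique normal forms for G over the generating set A ∪ (S \ {1})^{±1}. -/
/-!
Every `g : G` factors uniquely as `h * s` with `h ∈ H` and `s ∈ S`; the word for `g` is the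
normal form of `h` followed by the letter `s` when `s ≠ 1`, and by nothing when `s = 1`.
Parametrising the optional last letter by `Option (S \ {1}) ≃ S`, the words of `N_G`
correspond to `N_H × S ≃ H × S`, and evaluation becomes the multiplication `H × S → G`,
which is bijective. Prefix closure is inherited from `N_H`, since a proper
prefix of `u t` is a prefix of `u`.
-/

def IsPrefixClosed {α : Type*} (L : Set (List α)) : Prop :=
  ∀ w ∈ L, ∀ p, p <+: w → p ∈ L

section Words

variable {A B T : Type*}

def extendByLetter (NH : Set (List A)) (c : T → B) : Set (List (A ⊕ B)) :=
  {w | (∃ u ∈ NH, w = u.map Sum.inl) ∨ ∃ u ∈ NH, ∃ t, w = u.map Sum.inl ++ [Sum.inr (c t)]}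

theorem mem_extendByLetter_iff {NH : Set (List A)} {c : T → B} {w : List (A ⊕ B)} :
    w ∈ extendByLetter NH c ↔
      ∃ u ∈ NH, ∃ o : Option T, w = u.map Sum.inl ++ o.toList.map (Sum.inr ∘ c) := by
  constructor
  · rintro (⟨u, hu, rfl⟩ | ⟨u, hu, t, rfl⟩)
    · exact ⟨u, hu, none, by simp⟩
    · exact ⟨u, hu, some t, by simp⟩
  · rintro ⟨u, hu, _ | t, rfl⟩
    · exact Or.inl ⟨u, hu, by simp⟩
    · exact Or.inr ⟨u, hu, t, by simp⟩

theorem isPrefixClosed_extendByLetter {NH : Set (List A)} (hNH : IsPrefixClosed NH)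
    (c : T → B) : IsPrefixClosed (extendByLetter NH c) := by
  have prefix_map_mem : ∀ u ∈ NH, ∀ p, p <+: u.map Sum.inl → p ∈ extendByLetter NH c := by
    intro u hu p hp
    obtain ⟨q, hq, rfl⟩ := List.prefix_map_iff.1 hp
    exact Or.inl ⟨q, hNH u hu q hq, rfl⟩
  rintro w (⟨u, hu, rfl⟩ | ⟨u, hu, t, rfl⟩) p hp
  · exact prefix_map_mem u hu p hp
  · rcases List.prefix_concat_iff.1 hp with rfl | hp
    · exact Or.inr ⟨u, hu, t, rfl⟩
    · exact prefix_map_mem u hu p hp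

theorem prod_map_elim_append_optionLetter {M : Type*} [Monoid M] (f : A → M) (e : B → M)
    (c : T → B) (u : List A) (o : Option T) :
    ((u.map Sum.inl ++ o.toList.map (Sum.inr ∘ c)).map (Sum.elim f e)).prod =
      (u.map f).prod * o.elim 1 (e ∘ c) := by
  cases o <;> simp [Function.comp_def]

end Words

section CosetRepresentatives

variable {G : Type*} [Group G] {S : Set G}

theorem optionElim_one_val_mem (hS1 : (1 : G) ∈ S) (o : Option ↥(S \ {1})) :
    o.elim 1 Subtype.val ∈ S := by
  cases o with
  | none => exact hS1
  | some t => exact t.2.1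

theorem optionElim_one_val_injective :
    Function.Injective fun o : Option ↥(S \ {1}) => o.elim 1 Subtype.val := by
  rintro (_ | t) (_ | t') h
  · rfl
  · exact absurd h.symm t'.2.2
  · exact absurd h t.2.2
  · exact congrArg some (Subtype.ext h)

theorem exists_optionElim_one_val_eq {s : G} (hs : s ∈ S) :
    ∃ o : Option ↥(S \ {1}), o.elim 1 Subtype.val = s := by
  by_cases h1 : s = 1
  · exact ⟨none, h1.symm⟩
  · exact ⟨some ⟨s, hs, h1⟩, rfl⟩

end CosetRepresentatives

theorem existsUnique_mem_extendByLetter_prod_eq {G : Type*} [Group G] {H : Subgroup G}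
    {S : Set G} (hHS : Subgroup.IsComplement (H : Set G) S) (hS1 : (1 : G) ∈ S)
    {A B : Type*} {f : A → G} (hfH : ∀ x, f x ∈ H) {e : B → G} {c : ↥(S \ {1}) → B}
    (hec : ∀ t, e (c t) = t) {NH : Set (List A)}
    (hHnf : ∀ h ∈ H, ∃! w : List A, w ∈ NH ∧ (w.map f).prod = h) (g : G) :
    ∃! w, w ∈ extendByLetter NH c ∧ (w.map (Sum.elim f e)).prod = g := by
  have hec' : e ∘ c = Subtype.val := funext hec
  have prod_mem : ∀ u : List A, (u.map f).prod ∈ H := fun u =>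
    H.list_prod_mem (by simpa using fun x _ => hfH x)
  obtain ⟨⟨h, s⟩, rfl⟩ := hHS.2 g
  obtain ⟨u, ⟨hu, huh⟩, -⟩ := hHnf h h.2
  obtain ⟨o, hos⟩ := exists_optionElim_one_val_eq s.2
  refine ⟨_, ⟨mem_extendByLetter_iff.2 ⟨u, hu, o, rfl⟩, ?_⟩, ?_⟩
  · rw [prod_map_elim_append_optionLetter, hec', huh, hos]
  rintro w ⟨hw, hwg⟩
  obtain ⟨u', hu', o', rfl⟩ := mem_extendByLetter_iff.1 hw
  rw [prod_map_elim_append_optionLetter, hec'] at hwg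
  have hpair := @hHS.1 ⟨⟨_, prod_mem u'⟩, ⟨_, optionElim_one_val_mem hS1 o'⟩⟩ (h, s) hwg
  simp only [Prod.mk.injEq, Subtype.ext_iff] at hpair
  obtain rfl : u' = u := (hHnf h h.2).unique ⟨hu', hpair.1⟩ ⟨hu, huh⟩
  obtain rfl : o' = o := optionElim_one_val_injective (hpair.2.trans hos.symm)
  rfl

theorem finite_index_normal_forms_general
    {G : Type*} [Group G] (H : Subgroup G)
    (S : Set G) (hS1 : (1 : G) ∈ S)
    (hStrans : ∀ g : G, ∃! p : H × S, g = (p.1 : G) * (p.2 : G))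
    {A : Type*} (f : A → G)
    (hfH : ∀ x : A, f x ∈ H)
    (NH : Set (List A))
    (hHpc : ∀ w ∈ NH, ∀ p : List A, p <+: w → p ∈ NH)
    (hHnf : ∀ h ∈ H, ∃! w : List A, w ∈ NH ∧ (w.map f).prod = h) :
    -- the alphabet is `A ⊕ (S \ {1}) × Bool`, a letter `(t, true)` standing
    -- for `t` and `(t, false)` for `t⁻¹`
    (∀ w ∈ {w : List (A ⊕ ↥(S \ {1}) × Bool) |
        (∃ u ∈ NH, w = u.map Sum.inl) ∨
        (∃ u ∈ NH, ∃ t : ↥(S \ {1}), w = u.map Sum.inl ++ [Sum.inr (t, true)])},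
      ∀ p : List (A ⊕ ↥(S \ {1}) × Bool), p <+: w →
        p ∈ {w : List (A ⊕ ↥(S \ {1}) × Bool) |
          (∃ u ∈ NH, w = u.map Sum.inl) ∨
          (∃ u ∈ NH, ∃ t : ↥(S \ {1}), w = u.map Sum.inl ++ [Sum.inr (t, true)])}) ∧
    (∀ g : G, ∃! w : List (A ⊕ ↥(S \ {1}) × Bool),
        ((∃ u ∈ NH, w = u.map Sum.inl) ∨
          (∃ u ∈ NH, ∃ t : ↥(S \ {1}), w = u.map Sum.inl ++ [Sum.inr (t, true)])) ∧
        (w.map (Sum.elim f (fun p => if p.2 then (p.1 : G) else (p.1 : G)⁻¹))).prod = g) := by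
  have hHS : Subgroup.IsComplement (H : Set G) S :=
    Subgroup.isComplement_iff_existsUnique.2 fun g =>
      (hStrans g).elim fun p hp hpu => ⟨p, hp.symm, fun q hq => hpu q hq.symm⟩
  exact ⟨isPrefixClosed_extendByLetter hHpc fun t => (t, true),
    existsUnique_mem_extendByLetter_prod_eq hHS hS1 hfH (c := fun t => (t, true)) (fun _ => rfl) hHnf⟩

/-- Let `H` be a finite-index subgroup of `G`, `S` a set of right-coset
representatives of `H` in `G` with `1 ∈ S`, and `N_H` a prefix-closed set of
unique normal forms for `H` over a finite inverse-closed generating set `A` of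
`H`.  Then `N_G := N_H ∪ {ut ∣ u ∈ N_H, t ∈ S \ {1}}`, with each `t ∈ S \ {1}`
a new letter, is a prefix-closed set of unique normal forms for `G` over the
generating set `A ∪ (S \ {1})^{±1}`. -/
theorem finite_index_normal_forms
    {G : Type*} [Group G] (H : Subgroup G) [H.FiniteIndex]
    (S : Set G) (hS1 : (1 : G) ∈ S)
    (hStrans : ∀ g : G, ∃! p : H × S, g = (p.1 : G) * (p.2 : G))
    {A : Type*} [Fintype A] (f : A → G)
    (hfH : ∀ x : A, f x ∈ H)
    (hinv : ∀ x : A, ∃ y : A, f y = (f x)⁻¹)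
    (NH : Set (List A))
    (hHpc : ∀ w ∈ NH, ∀ p : List A, p <+: w → p ∈ NH)
    (hHnf : ∀ h ∈ H, ∃! w : List A, w ∈ NH ∧ (w.map f).prod = h) :
    -- the alphabet is `A ⊕ (S \ {1}) × Bool`, a letter `(t, true)` standing
    -- for `t` and `(t, false)` for `t⁻¹`
    (∀ w ∈ {w : List (A ⊕ ↥(S \ {1}) × Bool) |
        (∃ u ∈ NH, w = u.map Sum.inl) ∨
        (∃ u ∈ NH, ∃ t : ↥(S \ {1}), w = u.map Sum.inl ++ [Sum.inr (t, true)])},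
      ∀ p : List (A ⊕ ↥(S \ {1}) × Bool), p <+: w →
        p ∈ {w : List (A ⊕ ↥(S \ {1}) × Bool) |
          (∃ u ∈ NH, w = u.map Sum.inl) ∨
          (∃ u ∈ NH, ∃ t : ↥(S \ {1}), w = u.map Sum.inl ++ [Sum.inr (t, true)])}) ∧
    (∀ g : G, ∃! w : List (A ⊕ ↥(S \ {1}) × Bool),
        ((∃ u ∈ NH, w = u.map Sum.inl) ∨
          (∃ u ∈ NH, ∃ t : ↥(S \ {1}), w = u.map Sum.inl ++ [Sum.inr (t, true)])) ∧
        (w.map (Sum.elim f (fun p => if p.2 then (p.1 : G) else (p.1 : G)⁻¹))).prod = g) :=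
  finite_index_normal_forms_general H S hS1 hStrans f hfH NH hHpc hHnf
end
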